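/- arXiv:1805.00858 — 5 statements merged into one kernel-verified Lean document; each statement's English description precedes it below -/
import Mathlib

section
/- Every simple graph G = (V,E) with an edge coloring c : E → {1,...,p} (not necessarily proper, all p colors used) has a subset S ⊂ V with ∅ ≠ S ≠ V such that the edge cut ∂S = {e ∈ E : e has exactly one endpoint in S} uses at least p/2 colors, i.e., |c(∂S)| ≥ p/2. -/
open Set

/-- The edge cut of `S`: edges of `G` with exactly one endpoint in `S`. -/
def cutEdges {V : Type*} (G : SimpleGraph V) (S : Set V) : Set (Sym2 V) :=
  {e | e ∈ G.edgeSet ∧ ∃ u v, e = s(u, v) ∧ u ∈ S ∧ v ∉ S}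

/-!
Double counting over all `2 ^ |V|` subsets `S ⊆ V`: flipping the membership of one endpoint
of an edge `uv` is an involution exchanging the sets that separate `u` from `v` with those that
do not, so exactly half of all sets put `uv` into the cut. Hence every colour lies in
`c(∂S)` for at least half of the sets, and `∑_S |c(∂S)| ≥ p · 2 ^ |V| / 2`. The sets `∅` and `V`
have empty cut, so the average of `|c(∂S)|` over the remaining `2 ^ |V| - 2` sets is still at
least `p / 2`.
-/

open Finset

namespace SimpleGraph

variable {V : Type*} (G : SimpleGraph V)

lemma mk_mem_cutEdges {S : Set V} {u v : V} (h : G.Adj u v) (hS : u ∈ S ↔ v ∉ S) :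
    s(u, v) ∈ cutEdges G S := by
  by_cases hu : u ∈ S
  · exact ⟨h, u, v, rfl, hu, hS.mp hu⟩
  · exact ⟨h, v, u, Sym2.eq_swap, not_not.mp (mt hS.mpr hu), hu⟩

@[simp]
lemma cutEdges_empty : cutEdges G ∅ = ∅ := by
  simp [cutEdges]

@[simp]
lemma cutEdges_univ : cutEdges G univ = ∅ := by
  simp [cutEdges]

end SimpleGraph

open scoped Classical in
lemma two_mul_card_filter_mem_iff_notMem {V : Type*} [Fintype V] {u v : V} (huv : u ≠ v) :
    2 * #{S : Set V | u ∈ S ↔ v ∉ S} = 2 ^ Fintype.card V := by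
  have hflip : #{S : Set V | u ∈ S ↔ v ∉ S} = #{S : Set V | ¬(u ∈ S ↔ v ∉ S)} := by
    refine card_nbij' (symmDiff · {v}) (symmDiff · {v}) ?_ ?_ ?_ ?_ <;>
      intro S hS <;> simp [Set.mem_symmDiff, huv] at hS ⊢ <;> tauto
  rw [two_mul]
  nth_rw 2 [hflip]
  rw [card_filter_add_card_filter_not, card_univ, Fintype.card_set]

open scoped Classical in
lemma card_mul_two_pow_le_two_mul_sum_ncard_image_cutEdges {V κ : Type*} [Fintype V]
    [Fintype κ] (G : SimpleGraph V) (c : Sym2 V → κ) (hsurj : ∀ i, ∃ e ∈ G.edgeSet, c e = i) :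
    Fintype.card κ * 2 ^ Fintype.card V ≤ 2 * ∑ S : Set V, (c '' cutEdges G S).ncard := by
  set r : Set V → κ → Prop := fun S i => i ∈ c '' cutEdges G S
  have hcolor : ∀ i, 2 ^ Fintype.card V ≤ 2 * #(univ.bipartiteBelow r i) := by
    intro i
    obtain ⟨e, he, rfl⟩ := hsurj i
    induction e using Sym2.ind with | _ u v => ?_
    rw [← two_mul_card_filter_mem_iff_notMem (G.ne_of_adj he)]
    gcongr
    intro S hS
    simp only [mem_bipartiteBelow, mem_filter, Finset.mem_univ, true_and] at hS ⊢
    exact ⟨s(u, v), G.mk_mem_cutEdges he hS, rfl⟩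
  calc Fintype.card κ * 2 ^ Fintype.card V
      = ∑ _i : κ, 2 ^ Fintype.card V := by simp
    _ ≤ ∑ i, 2 * #(univ.bipartiteBelow r i) := sum_le_sum fun i _ => hcolor i
    _ = 2 * ∑ S, #(univ.bipartiteAbove r S) := by
      rw [← mul_sum, sum_card_bipartiteAbove_eq_sum_card_bipartiteBelow]
    _ = 2 * ∑ S : Set V, (c '' cutEdges G S).ncard := by
      congr 1
      refine sum_congr rfl fun S _ => ?_
      rw [ncard_eq_toFinset_card', bipartiteAbove, filter_mem_univ_eq_toFinset]

/-- Every simple graph with a surjective edge coloring with `p` colors has a nontrivial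
edge cut using at least `p/2` colors. -/
theorem stmt0 {V : Type*} [Fintype V] (hV : 2 ≤ Fintype.card V)
    (G : SimpleGraph V) (p : ℕ) (c : Sym2 V → Fin p)
    (hsurj : ∀ i : Fin p, ∃ e ∈ G.edgeSet, c e = i) :
    ∃ S : Set V, S.Nonempty ∧ S ≠ Set.univ ∧ p ≤ 2 * (c '' cutEdges G S).ncard := by
  classical
  set T : Finset (Set V) := Finset.univ \ {∅, Set.univ}
  have : Nontrivial V := Fintype.one_lt_card_iff_nontrivial.mp hV
  have hT : T.Nonempty := by
    obtain ⟨a⟩ : Nonempty V := inferInstance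
    exact ⟨{a}, by simp [T, Set.singleton_ne_univ]⟩
  have hsum : ∑ _S ∈ T, p ≤ ∑ S ∈ T, 2 * (c '' cutEdges G S).ncard :=
    calc ∑ _S ∈ T, p = #T * p := sum_const_nat fun _ _ => rfl
      _ ≤ Fintype.card (Fin p) * 2 ^ Fintype.card V := by
        rw [Fintype.card_fin, mul_comm, ← Fintype.card_set]
        exact Nat.mul_le_mul_left p (card_le_univ T)
      _ ≤ 2 * ∑ S : Set V, (c '' cutEdges G S).ncard :=
        card_mul_two_pow_le_two_mul_sum_ncard_image_cutEdges G c hsurj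
      _ = ∑ S ∈ T, 2 * (c '' cutEdges G S).ncard := by
        rw [← mul_sum]
        refine congrArg _ (sum_subset (subset_univ T) fun S _ hS => ?_).symm
        obtain rfl | rfl : S = ∅ ∨ S = Set.univ := by simpa [T, or_iff_not_imp_left] using hS
        all_goals simp
  obtain ⟨S, hST, hp⟩ := exists_le_of_sum_le hT hsum
  obtain ⟨hS₀, hS₁⟩ : S ≠ ∅ ∧ S ≠ Set.univ := by simpa [T] using hST
  exact ⟨S, nonempty_iff_ne_empty.mpr hS₀, hS₁, hp⟩
end

section
/- Let G = (V,E) be a finite simple graph with edge coloring c : E → {1,...,p}. Construct G' by adding a new vertex v adjacent to all vertices of V, adding all missing edges between vertices of V, and coloring every new edge with a single new color p+1. Then G' (a complete graph on |V|+1 vertices) has a cut using all p+1 colors if and only if G has a cut using all p colors. -/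
open Set

/-!
Colors `1, …, p` occur only on edges of `G`, so a cut of `G'` using all `p + 1` colors
restricts to the old vertices as a cut of `G` using all `p` colors (for `p = 0` any proper
nonempty subset of `V` will do). Conversely a cut `S` of `G` is still a cut of `G'`, since
`v ∉ S`, and any edge from `S` to `v` supplies the new color.
-/

section cutEdges

variable {V : Type*} {G : SimpleGraph V} {S : Set V}

theorem mk_mem_cutEdges_iff {u v : V} :
    s(u, v) ∈ cutEdges G S ↔ G.Adj u v ∧ ¬(u ∈ S ↔ v ∈ S) := by
  constructor
  · rintro ⟨hadj, x, y, hxy, hx, hy⟩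
    refine ⟨hadj, ?_⟩
    rcases Sym2.eq_iff.mp hxy with ⟨rfl, rfl⟩ | ⟨rfl, rfl⟩ <;> tauto
  · rintro ⟨hadj, hS⟩
    refine ⟨hadj, ?_⟩
    by_cases hu : u ∈ S
    · exact ⟨u, v, rfl, hu, by tauto⟩
    · exact ⟨v, u, Sym2.eq_swap, by tauto, hu⟩

theorem nonempty_ne_univ_of_cutEdges_nonempty (h : (cutEdges G S).Nonempty) :
    S.Nonempty ∧ S ≠ univ := by
  obtain ⟨-, -, u, v, -, hu, hv⟩ := h
  exact ⟨⟨u, hu⟩, fun hS => hv (hS ▸ mem_univ v)⟩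

theorem mk_mem_cutEdges_preimage_iff {W : Type*} {H : SimpleGraph W} {f : V → W} {T : Set W}
    {u v : V} (hG : G.Adj u v) (hH : H.Adj (f u) (f v)) :
    s(u, v) ∈ cutEdges G (f ⁻¹' T) ↔ s(f u, f v) ∈ cutEdges H T := by
  simp only [mk_mem_cutEdges_iff, hG, hH, true_and, mem_preimage]

end cutEdges

section Extension

variable {V : Type*} {G : SimpleGraph V} {p : ℕ} {c : Sym2 V → Fin p}
  {c' : Sym2 (Option V) → Fin (p + 1)}

structure IsNewColorExtension (G : SimpleGraph V) (c : Sym2 V → Fin p)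
    (c' : Sym2 (Option V) → Fin (p + 1)) : Prop where
  old : ∀ u v : V, G.Adj u v → c' s(some u, some v) = Fin.castSucc (c s(u, v))
  new : ∀ e ∈ (⊤ : SimpleGraph (Option V)).edgeSet,
    (¬ ∃ u v : V, G.Adj u v ∧ e = s(some u, some v)) → c' e = Fin.last p

theorem IsNewColorExtension.exists_adj_of_color_eq_castSucc
    (hc' : IsNewColorExtension G c c')
    {e : Sym2 (Option V)} (he : e ∈ (⊤ : SimpleGraph (Option V)).edgeSet) {i : Fin p}
    (hi : c' e = Fin.castSucc i) :
    ∃ u v : V, G.Adj u v ∧ e = s(some u, some v) ∧ c s(u, v) = i := by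
  by_cases h_old : ∃ u v : V, G.Adj u v ∧ e = s(some u, some v)
  · obtain ⟨u, v, hadj, rfl⟩ := h_old
    exact ⟨u, v, hadj, rfl, Fin.castSucc_injective p (hc'.old u v hadj ▸ hi)⟩
  · exact absurd (hc'.new e he h_old ▸ hi).symm (Fin.castSucc_ne_last i)

theorem IsNewColorExtension.image_cutEdges_preimage_some_eq_univ
    (hc' : IsNewColorExtension G c c')
    {S : Set (Option V)} (hcut : c' '' cutEdges ⊤ S = univ) :
    c '' cutEdges G (some ⁻¹' S) = univ := by
  refine eq_univ_of_forall fun i => ?_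
  obtain ⟨e, he, hi⟩ := hcut.symm ▸ mem_univ (Fin.castSucc i)
  obtain ⟨u, v, hadj, rfl, rfl⟩ := hc'.exists_adj_of_color_eq_castSucc he.1 hi
  exact ⟨s(u, v), (mk_mem_cutEdges_preimage_iff hadj (by simpa using hadj.ne)).2 he, rfl⟩

theorem IsNewColorExtension.image_cutEdges_image_some_eq_univ
    (hc' : IsNewColorExtension G c c')
    {S : Set V} (hS : S.Nonempty) (hcut : c '' cutEdges G S = univ) :
    c' '' cutEdges ⊤ (some '' S) = univ := by
  refine eq_univ_of_forall (Fin.lastCases ?_ fun i => ?_)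
  · obtain ⟨u, hu⟩ := hS
    refine ⟨s(some u, none), mk_mem_cutEdges_iff.2 ⟨by simp, by simp [hu]⟩,
      hc'.new _ (by simp) ?_⟩
    rintro ⟨x, y, -, hxy⟩
    simp at hxy
  · obtain ⟨e, he, rfl⟩ := hcut.symm ▸ mem_univ i
    obtain ⟨hadj, u, v, rfl, -, -⟩ := id he
    refine ⟨s(some u, some v), ?_, hc'.old u v hadj⟩
    rwa [← mk_mem_cutEdges_preimage_iff hadj (by simpa using hadj.ne),
      preimage_image_eq S (Option.some_injective V)]

end Extension

theorem stmt6_general {V : Type*} [Fintype V] (hV : 2 ≤ Fintype.card V)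
    (G : SimpleGraph V) (p : ℕ) (c : Sym2 V → Fin p)
    (c' : Sym2 (Option V) → Fin (p + 1))
    (hold : ∀ u v : V, G.Adj u v → c' s(some u, some v) = Fin.castSucc (c s(u, v)))
    (hnew : ∀ e ∈ (⊤ : SimpleGraph (Option V)).edgeSet,
      (¬ ∃ u v : V, G.Adj u v ∧ e = s(some u, some v)) → c' e = Fin.last p) :
    (∃ S : Set (Option V), S.Nonempty ∧ S ≠ Set.univ ∧
        c' '' cutEdges (⊤ : SimpleGraph (Option V)) S = Set.univ) ↔
      (∃ S : Set V, S.Nonempty ∧ S ≠ Set.univ ∧ c '' cutEdges G S = Set.univ) := by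
  have hc' : IsNewColorExtension G c c' := ⟨hold, hnew⟩
  constructor
  · rintro ⟨S', -, -, hcut⟩
    rcases p.eq_zero_or_pos with rfl | hp
    · have : Nontrivial V := Fintype.one_lt_card_iff_nontrivial.mp hV
      obtain ⟨a, -⟩ := exists_pair_ne V
      exact ⟨{a}, singleton_nonempty a, singleton_ne_univ a, eq_univ_of_forall (·.elim0)⟩
    · have hrestrict := hc'.image_cutEdges_preimage_some_eq_univ hcut
      obtain ⟨e, he, -⟩ := hrestrict.symm ▸ mem_univ (⟨0, hp⟩ : Fin p)
      obtain ⟨hne, hne_univ⟩ := nonempty_ne_univ_of_cutEdges_nonempty ⟨e, he⟩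
      exact ⟨_, hne, hne_univ, hrestrict⟩
  · rintro ⟨S, hS, -, hcut⟩
    refine ⟨some '' S, hS.image some, fun h => ?_,
      hc'.image_cutEdges_image_some_eq_univ hS hcut⟩
    have hnone : none ∈ some '' S := h ▸ mem_univ none
    simp at hnone

/-- The complete graph `G'` on `V ∪ {v}` obtained from `G` by adding a universal vertex
and all missing edges, all colored with one new color `p+1`, has a cut using all `p+1`
colors iff `G` has a cut using all `p` colors. -/
theorem stmt6 {V : Type*} [Fintype V] (hV : 2 ≤ Fintype.card V)
    (G : SimpleGraph V) (p : ℕ) (c : Sym2 V → Fin p)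
    (hsurj : ∀ i : Fin p, ∃ e ∈ G.edgeSet, c e = i)
    (c' : Sym2 (Option V) → Fin (p + 1))
    (hold : ∀ u v : V, G.Adj u v → c' s(some u, some v) = Fin.castSucc (c s(u, v)))
    (hnew : ∀ e ∈ (⊤ : SimpleGraph (Option V)).edgeSet,
      (¬ ∃ u v : V, G.Adj u v ∧ e = s(some u, some v)) → c' e = Fin.last p) :
    (∃ S : Set (Option V), S.Nonempty ∧ S ≠ Set.univ ∧
        c' '' cutEdges (⊤ : SimpleGraph (Option V)) S = Set.univ) ↔
      (∃ S : Set V, S.Nonempty ∧ S ≠ Set.univ ∧ c '' cutEdges G S = Set.univ) :=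
  stmt6_general hV G p c c' hold hnew
end

section
/- Let G = (V,E) be a finite simple graph with edge coloring c : E → {1,...,p}, and suppose color class E_i = {e : c(e) = i} satisfies |E_i| > 2·(p choose 2). Then every maximum colored cut of G contains color i; that is, for every nontrivial S ⊂ V with |c(∂S)| maximum, i ∈ c(∂S). -/
/-!
Suppose `S` is a maximum colored cut missing color `i`. Then every `i`-edge lies inside `S`
or inside its complement. If `uv` is an `i`-edge inside `S`, moving `u` to the other side
adds color `i` to the cut, so by maximality it must lose a color `j`: every cut edge of
color `j` goes through `u`. Such a color is private to a single vertex of `S`, so choosing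
one for each endpoint sends the `i`-edges inside `S` injectively to pairs of distinct
colors. Hence there are at most `p choose 2` of them, and likewise inside the complement.
-/

open Set

namespace Sym2

variable {α β : Type*}

theorem ncard_not_isDiag [Fintype α] :
    {z : Sym2 α | ¬ z.IsDiag}.ncard = (Fintype.card α).choose 2 := by
  classical
  exact Nat.card_eq_fintype_card.trans card_subtype_not_diag

theorem injOn_map_of_injOn {A : Set (Sym2 α)} {g : α → β}
    (hg : InjOn g {x | ∃ e ∈ A, x ∈ e}) : InjOn (map g) A := by
  intro e he e' he' h
  induction e using Sym2.ind with | _ a b => ?_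
  induction e' using Sym2.ind with | _ a' b' => ?_
  have mem {x : α} {e : Sym2 α} (he : e ∈ A) (hx : x ∈ e) : x ∈ {x | ∃ e ∈ A, x ∈ e} :=
    ⟨e, he, hx⟩
  rcases Sym2.eq_iff.1 h with ⟨haa, hbb⟩ | ⟨hab, hba⟩
  · rw [hg (mem he (mem_mk_left a b)) (mem he' (mem_mk_left a' b')) haa,
      hg (mem he (mem_mk_right a b)) (mem he' (mem_mk_right a' b')) hbb]
  · rw [hg (mem he (mem_mk_left a b)) (mem he' (mem_mk_right a' b')) hab,
      hg (mem he (mem_mk_right a b)) (mem he' (mem_mk_left a' b')) hba, eq_swap]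

theorem ncard_le_choose_two_of_injOn [Fintype β] {A : Set (Sym2 α)}
    (hA : ∀ e ∈ A, ¬ e.IsDiag) {g : α → β} (hg : InjOn g {x | ∃ e ∈ A, x ∈ e}) :
    A.ncard ≤ (Fintype.card β).choose 2 := by
  have himage : map g '' A ⊆ {z | ¬ z.IsDiag} := by
    rintro _ ⟨e, he, rfl⟩
    induction e using Sym2.ind with | _ a b => ?_
    simp only [mem_ofPred_eq, map_mk, mk_isDiag_iff]
    intro hab
    exact hA _ he (mk_isDiag_iff.2 (hg ⟨_, he, mem_mk_left a b⟩ ⟨_, he, mem_mk_right a b⟩ hab))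
  calc A.ncard = (map g '' A).ncard := (injOn_map_of_injOn hg).ncard_image.symm
    _ ≤ {z : Sym2 β | ¬ z.IsDiag}.ncard := ncard_le_ncard himage (toFinite _)
    _ = (Fintype.card β).choose 2 := ncard_not_isDiag

end Sym2

section ColoredCut

variable {V : Type*} {p : ℕ} (G : SimpleGraph V) (c : Sym2 V → Fin p) (S : Set V)

theorem cutEdges_compl : cutEdges G Sᶜ = cutEdges G S := by
  ext e
  constructor
  · rintro ⟨he, u, v, rfl, hu, hv⟩
    exact ⟨he, v, u, Sym2.eq_swap, not_not.1 hv, hu⟩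
  · rintro ⟨he, u, v, rfl, hu, hv⟩
    exact ⟨he, v, u, Sym2.eq_swap, hv, not_not.2 hu⟩

def IsPrivateColor (j : Fin p) (u : V) : Prop :=
  j ∈ c '' cutEdges G S ∧ ∀ e ∈ cutEdges G S, c e = j → u ∈ e

variable {G c S}

theorem IsPrivateColor.eq {j : Fin p} {u u' : V} (hu : u ∈ S) (hu' : u' ∈ S)
    (h : IsPrivateColor G c S j u) (h' : IsPrivateColor G c S j u') : u = u' := by
  obtain ⟨e, he, hce⟩ := h.1
  have hue := h.2 e he hce
  have hue' := h'.2 e he hce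
  obtain ⟨-, x, y, rfl, -, hy⟩ := he
  rcases Sym2.mem_iff.1 hue with rfl | rfl
  · rcases Sym2.mem_iff.1 hue' with rfl | rfl
    · rfl
    · exact absurd hu' hy
  · exact absurd hu hy

/-- Color `i` enters the cut, and each non-private color survives on a cut edge avoiding `u`. -/
theorem ncard_image_cutEdges_lt_diff_singleton {i : Fin p} (hni : i ∉ c '' cutEdges G S)
    {u v : V} (hv : v ∈ S) (hadj : G.Adj u v) (hc : c s(u, v) = i)
    (hpriv : ∀ j, ¬ IsPrivateColor G c S j u) :
    (c '' cutEdges G S).ncard < (c '' cutEdges G (S \ {u})).ncard := by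
  have hiT : i ∈ c '' cutEdges G (S \ {u}) :=
    ⟨s(u, v), ⟨hadj, v, u, Sym2.eq_swap, ⟨hv, hadj.ne.symm⟩, fun h => h.2 rfl⟩, hc⟩
  have hsub : c '' cutEdges G S ⊆ c '' cutEdges G (S \ {u}) := by
    intro j hj
    obtain ⟨e, he, hce, hue⟩ : ∃ e ∈ cutEdges G S, c e = j ∧ u ∉ e := by
      simpa [IsPrivateColor, hj] using hpriv j
    obtain ⟨heE, x, y, rfl, hx, hy⟩ := he
    refine ⟨s(x, y), ⟨heE, x, y, rfl, ⟨hx, ?_⟩, fun h => hy h.1⟩, hce⟩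
    rintro rfl
    exact hue (Sym2.mem_mk_left _ _)
  calc (c '' cutEdges G S).ncard < (c '' cutEdges G S).ncard + 1 := Nat.lt_succ_self _
    _ = (insert i (c '' cutEdges G S)).ncard := (ncard_insert_of_notMem hni).symm
    _ ≤ _ := ncard_le_ncard (insert_subset hiT hsub) (toFinite _)

theorem exists_isPrivateColor_of_maximal {i : Fin p}
    (hmax : ∀ T : Set V, T.Nonempty → T ≠ Set.univ →
      (c '' cutEdges G T).ncard ≤ (c '' cutEdges G S).ncard)
    (hni : i ∉ c '' cutEdges G S) {u v : V} (hv : v ∈ S) (hadj : G.Adj u v)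
    (hc : c s(u, v) = i) : ∃ j, IsPrivateColor G c S j u := by
  by_contra! hpriv
  have hT : (S \ {u}).Nonempty := ⟨v, hv, hadj.ne.symm⟩
  have hTu : S \ {u} ≠ univ := fun h => (h.symm ▸ mem_univ u : u ∈ S \ {u}).2 rfl
  exact (hmax _ hT hTu).not_gt (ncard_image_cutEdges_lt_diff_singleton hni hv hadj hc hpriv)

theorem ncard_colorClass_inside_le {i : Fin p}
    (hmax : ∀ T : Set V, T.Nonempty → T ≠ Set.univ →
      (c '' cutEdges G T).ncard ≤ (c '' cutEdges G S).ncard)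
    (hni : i ∉ c '' cutEdges G S) :
    {e ∈ G.edgeSet | c e = i ∧ ∀ x ∈ e, x ∈ S}.ncard ≤ p.choose 2 := by
  set A := {e ∈ G.edgeSet | c e = i ∧ ∀ x ∈ e, x ∈ S}
  have hpriv : ∀ x ∈ {x | ∃ e ∈ A, x ∈ e}, ∃ j, IsPrivateColor G c S j x := by
    rintro x ⟨e, ⟨heE, hce, heS⟩, hx⟩
    obtain ⟨y, rfl⟩ := Sym2.mem_iff_exists.1 hx
    exact exists_isPrivateColor_of_maximal hmax hni (heS y (Sym2.mem_mk_right x y)) heE hce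
  have : Nonempty (Fin p) := ⟨i⟩
  choose! g hg using hpriv
  have hinj : InjOn g {x | ∃ e ∈ A, x ∈ e} := by
    rintro x hx y hy hxy
    obtain ⟨e, he, hxe⟩ := hx
    obtain ⟨e', he', hye'⟩ := hy
    exact (hg x ⟨e, he, hxe⟩).eq (he.2.2 x hxe) (he'.2.2 y hye') (hxy ▸ hg y ⟨e', he', hye'⟩)
  simpa using Sym2.ncard_le_choose_two_of_injOn (fun e he => G.not_isDiag_of_mem_edgeSet he.1) hinj

theorem colorClass_eq_union_inside {i : Fin p} (hni : i ∉ c '' cutEdges G S) :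
    {e ∈ G.edgeSet | c e = i} =
      {e ∈ G.edgeSet | c e = i ∧ ∀ x ∈ e, x ∈ S} ∪ {e ∈ G.edgeSet | c e = i ∧ ∀ x ∈ e, x ∈ Sᶜ} := by
  ext e
  induction e using Sym2.ind with | _ u v => ?_
  simp only [mem_union, mem_ofPred_eq, Sym2.mem_iff, forall_eq_or_imp, forall_eq, mem_compl_iff]
  constructor
  · rintro ⟨heE, hci⟩
    by_cases hu : u ∈ S <;> by_cases hv : v ∈ S
    · exact .inl ⟨heE, hci, hu, hv⟩
    · exact absurd ⟨s(u, v), ⟨heE, u, v, rfl, hu, hv⟩, hci⟩ hni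
    · exact absurd ⟨s(u, v), ⟨heE, v, u, Sym2.eq_swap, hv, hu⟩, hci⟩ hni
    · exact .inr ⟨heE, hci, hu, hv⟩
  · rintro (⟨heE, hci, -⟩ | ⟨heE, hci, -⟩) <;> exact ⟨heE, hci⟩

end ColoredCut

theorem stmt8_general {V : Type*} (G : SimpleGraph V) (p : ℕ) (c : Sym2 V → Fin p)
    (i : Fin p) (hi : 2 * Nat.choose p 2 < {e ∈ G.edgeSet | c e = i}.ncard) :
    ∀ S : Set V, S.Nonempty → S ≠ Set.univ →
      (∀ T : Set V, T.Nonempty → T ≠ Set.univ →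
        (c '' cutEdges G T).ncard ≤ (c '' cutEdges G S).ncard) →
      i ∈ c '' cutEdges G S := by
  intro S _ _ hmax
  by_contra hni
  have hmaxc : ∀ T : Set V, T.Nonempty → T ≠ Set.univ →
      (c '' cutEdges G T).ncard ≤ (c '' cutEdges G Sᶜ).ncard := by
    simpa only [cutEdges_compl] using hmax
  have hnic : i ∉ c '' cutEdges G Sᶜ := by rwa [cutEdges_compl]
  refine hi.not_ge ?_
  calc {e ∈ G.edgeSet | c e = i}.ncard
      = ({e ∈ G.edgeSet | c e = i ∧ ∀ x ∈ e, x ∈ S} ∪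
          {e ∈ G.edgeSet | c e = i ∧ ∀ x ∈ e, x ∈ Sᶜ}).ncard := by
        rw [colorClass_eq_union_inside hni]
    _ ≤ {e ∈ G.edgeSet | c e = i ∧ ∀ x ∈ e, x ∈ S}.ncard +
          {e ∈ G.edgeSet | c e = i ∧ ∀ x ∈ e, x ∈ Sᶜ}.ncard := ncard_union_le _ _
    _ ≤ p.choose 2 + p.choose 2 :=
        add_le_add (ncard_colorClass_inside_le hmax hni) (ncard_colorClass_inside_le hmaxc hnic)
    _ = 2 * p.choose 2 := (two_mul _).symm

/-- If color class `i` has more than `2 * (p choose 2)` edges, then color `i` appears in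
every maximum colored cut. -/
theorem stmt8 {V : Type*} [Fintype V] (G : SimpleGraph V) (p : ℕ) (c : Sym2 V → Fin p)
    (i : Fin p) (hi : 2 * Nat.choose p 2 < {e ∈ G.edgeSet | c e = i}.ncard) :
    ∀ S : Set V, S.Nonempty → S ≠ Set.univ →
      (∀ T : Set V, T.Nonempty → T ≠ Set.univ →
        (c '' cutEdges G T).ncard ≤ (c '' cutEdges G S).ncard) →
      i ∈ c '' cutEdges G S :=
  stmt8_general G p c i hi
end

section
/- Every graph (with at least one edge) whose edges are colored with p colors such that k ≤ p/2 has a nontrivial cut using at least k colors. Consequently, every instance of Maximum Colored Cut with k ≤ p/2 is a Yes-instance. -/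
open Set

/-!
Pick one edge of each colour. Toggling an endpoint `u` of an edge `uv` is an involution on the
subsets of `V` that swaps those separating `u` from `v` with those that do not, so each edge is
cut by exactly half of the `2 ^ |V|` subsets. Averaging, some subset cuts at least `p / 2 ≥ k` of
the chosen edges, hence sees at least `k` colours; as `k > 0` its cut is nonempty, so the subset
is proper and nonempty.
-/

open Finset

theorem Finset.two_mul_card_filter_of_involutive {α : Type*} [Fintype α] {σ : α → α}
    (hσ : Function.Involutive σ) {P : α → Prop} [DecidablePred P] (hP : ∀ x, P (σ x) ↔ ¬ P x) :
    2 * #{x | P x} = Fintype.card α := by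
  have hswap : #{x | P x} = #{x | ¬ P x} :=
    card_nbij' σ σ (fun x hx ↦ by simpa [hP] using hx) (fun x hx ↦ by simpa [hP] using hx)
      (fun x _ ↦ hσ x) (fun x _ ↦ hσ x)
  rw [two_mul, ← card_univ]
  nth_rw 2 [hswap]
  exact card_filter_add_card_filter_not _

theorem Finset.two_mul_card_filter_xor_mem {V : Type*} [Fintype V] [DecidableEq V] {u v : V}
    (huv : u ≠ v) : 2 * #{S : Finset V | Xor (u ∈ S) (v ∈ S)} = 2 ^ Fintype.card V := by
  rw [← Fintype.card_finset]
  refine two_mul_card_filter_of_involutive (symmDiff_left_involutive {u}) fun S ↦ ?_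
  simp only [mem_symmDiff, mem_singleton, huv.symm, xor_iff_not_iff]
  tauto

section Cut

variable {V : Type*} {G : SimpleGraph V}

theorem mem_cutEdges_iff_xor {S : Set V} {u v : V} (h : G.Adj u v) :
    s(u, v) ∈ cutEdges G S ↔ Xor (u ∈ S) (v ∈ S) := by
  constructor
  · rintro ⟨-, a, b, hab, ha, hb⟩
    rcases Sym2.eq_iff.mp hab with ⟨rfl, rfl⟩ | ⟨rfl, rfl⟩
    · exact Or.inl ⟨ha, hb⟩
    · exact Or.inr ⟨ha, hb⟩
  · rintro (⟨hu, hv⟩ | ⟨hv, hu⟩)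
    · exact ⟨h, u, v, rfl, hu, hv⟩
    · exact ⟨h, v, u, Sym2.eq_swap, hv, hu⟩

theorem nonempty_and_ne_univ_of_mem_cutEdges {S : Set V} {e : Sym2 V}
    (he : e ∈ cutEdges G S) : S.Nonempty ∧ S ≠ Set.univ := by
  obtain ⟨-, u, v, -, hu, hv⟩ := he
  exact ⟨⟨u, hu⟩, Set.ne_univ_iff_exists_notMem S |>.mpr ⟨v, hv⟩⟩

variable [Fintype V]

open Classical in
theorem two_mul_card_filter_mem_cutEdges {e : Sym2 V} (he : e ∈ G.edgeSet) :
    2 * #{S : Finset V | e ∈ cutEdges G S} = 2 ^ Fintype.card V := by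
  induction e using Sym2.ind with
  | h u v =>
    simp only [mem_cutEdges_iff_xor he]
    exact two_mul_card_filter_xor_mem (G.ne_of_adj he)

open Classical in
theorem exists_card_le_two_mul_card_cut {ι : Type*} [Fintype ι] {f : ι → Sym2 V}
    (hf : ∀ i, f i ∈ G.edgeSet) :
    ∃ S : Finset V, Fintype.card ι ≤ 2 * #{i | f i ∈ cutEdges G S} := by
  have hsum : ∑ _S : Finset V, Fintype.card ι =
      ∑ S : Finset V, 2 * #{i | f i ∈ cutEdges G S} := by
    simp only [sum_const, card_univ, Fintype.card_finset, smul_eq_mul, ← mul_sum, card_filter]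
    rw [sum_comm]
    simp only [← card_filter, mul_sum, two_mul_card_filter_mem_cutEdges (hf _), sum_const,
      card_univ, smul_eq_mul, mul_comm]
  obtain ⟨S, -, hS⟩ := exists_le_of_sum_le univ_nonempty hsum.le
  exact ⟨S, hS⟩

end Cut

theorem stmt13_general {V : Type*} [Fintype V]
    (G : SimpleGraph V) (p : ℕ) (c : Sym2 V → Fin p)
    (hsurj : ∀ i : Fin p, ∃ e ∈ G.edgeSet, c e = i)
    (k : ℕ) (hk : 0 < k) (hkp : 2 * k ≤ p) :
    ∃ S : Set V, S.Nonempty ∧ S ≠ Set.univ ∧ k ≤ (c '' cutEdges G S).ncard := by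
  classical
  choose f hfE hfc using hsurj
  obtain ⟨S, hS⟩ := exists_card_le_two_mul_card_cut hfE
  rw [Fintype.card_fin] at hS
  have hcolors : #{i | f i ∈ cutEdges G S} ≤ (c '' cutEdges G S).ncard := by
    rw [← Set.ncard_coe_finset, coe_filter_univ]
    exact Set.ncard_le_ncard fun i hi ↦ ⟨f i, hi, hfc i⟩
  obtain ⟨_, e, he, -⟩ :=
    Set.nonempty_of_ncard_ne_zero (by omega : (c '' cutEdges G S).ncard ≠ 0)
  obtain ⟨hne, hnu⟩ := nonempty_and_ne_univ_of_mem_cutEdges he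
  exact ⟨S, hne, hnu, by omega⟩

/-- If `k ≤ p/2`, every graph edge-colored surjectively with `p` colors has a nontrivial
cut using at least `k` colors: every such instance of Maximum Colored Cut is a
Yes-instance. -/
theorem stmt13 {V : Type*} [Fintype V] (hV : 2 ≤ Fintype.card V)
    (G : SimpleGraph V) (p : ℕ) (c : Sym2 V → Fin p)
    (hsurj : ∀ i : Fin p, ∃ e ∈ G.edgeSet, c e = i)
    (k : ℕ) (hk : 0 < k) (hkp : 2 * k ≤ p) :
    ∃ S : Set V, S.Nonempty ∧ S ≠ Set.univ ∧ k ≤ (c '' cutEdges G S).ncard :=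
  stmt13_general G p c hsurj k hk hkp
end

section
/- Adding isolated-modification via vertex identification preserves colorful cuts: let G be an edge-colored graph with connected components G₁, ..., G_m, pick a vertex v_j in each G_j, and form G* by identifying v₁, ..., v_m into a single vertex v (no parallel edges arise since components are disjoint). Then G* has a colorful cut if and only if G has a colorful cut. -/
/-
Every edge of the quotient `G*` comes from an edge of `G` of the same colour, so the preimage
of a colorful cut of `G*` is a colorful cut of `G`. Conversely, a cut of `G` is unchanged when
`S` is complemented inside whole connected components; complementing it in each component whose
chosen vertex lies in `S` yields a cut avoiding all chosen vertices. On such a set the quotient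
map is injective and does not identify inside and outside, so its image is a colorful cut of `G*`.
-/

open Set

open Function
open scoped symmDiff

section CutEdges

variable {V : Type*} {G : SimpleGraph V} {S S' : Set V}

lemma mem_cutEdges_iff {u v : V} (h : G.Adj u v) :
    s(u, v) ∈ cutEdges G S ↔ (u ∈ S ↔ v ∉ S) := by
  constructor
  · rintro ⟨-, a, b, hab, ha, hb⟩
    rcases Sym2.eq_iff.mp hab with ⟨rfl, rfl⟩ | ⟨rfl, rfl⟩ <;> tauto
  · intro huv
    by_cases hu : u ∈ S
    · exact ⟨h, u, v, rfl, hu, huv.mp hu⟩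
    · exact ⟨h, v, u, Sym2.eq_swap, by tauto, hu⟩

lemma cutEdges_congr (h : ∀ u v, G.Adj u v → ((u ∈ S ↔ v ∉ S) ↔ (u ∈ S' ↔ v ∉ S'))) :
    cutEdges G S = cutEdges G S' := by
  ext e
  induction e using Sym2.ind with
  | h u v =>
    by_cases huv : G.Adj u v
    · rw [mem_cutEdges_iff huv, mem_cutEdges_iff huv, h u v huv]
    · exact iff_of_false (fun he => huv he.1) (fun he => huv he.1)

lemma cutEdges_symmDiff_of_adj {R : Set V} (hR : ∀ u v, G.Adj u v → (u ∈ R ↔ v ∈ R)) :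
    cutEdges G (S ∆ R) = cutEdges G S :=
  cutEdges_congr fun u v huv => by
    have := hR u v huv
    simp only [mem_symmDiff]
    tauto

lemma Set.Nonempty.of_cutEdges (h : (cutEdges G S).Nonempty) : S.Nonempty := by
  obtain ⟨_, -, u, -, -, hu, -⟩ := h
  exact ⟨u, hu⟩

end CutEdges

section Quotient

variable {V W α : Type*} {G : SimpleGraph V} {H : SimpleGraph W} {q : V → W}
  {c : Sym2 V → α} {c' : Sym2 W → α}

lemma image_cutEdges_subset_image_cutEdges_preimage
    (hH : ∀ a b, H.Adj a b → ∃ x y, G.Adj x y ∧ q x = a ∧ q y = b)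
    (hc : ∀ x y, G.Adj x y → c' s(q x, q y) = c s(x, y)) (T : Set W) :
    c' '' cutEdges H T ⊆ c '' cutEdges G (q ⁻¹' T) := by
  rintro _ ⟨_, ⟨hab, a, b, rfl, ha, hb⟩, rfl⟩
  obtain ⟨x, y, hxy, rfl, rfl⟩ := hH a b hab
  exact ⟨s(x, y), ⟨hxy, x, y, rfl, ha, hb⟩, (hc x y hxy).symm⟩

lemma image_cutEdges_subset_image_cutEdges_image
    (hH : ∀ x y, G.Adj x y → q x ≠ q y → H.Adj (q x) (q y))
    (hc : ∀ x y, G.Adj x y → c' s(q x, q y) = c s(x, y)) {S : Set V}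
    (hS : q ⁻¹' (q '' S) = S) :
    c '' cutEdges G S ⊆ c' '' cutEdges H (q '' S) := by
  rintro _ ⟨_, ⟨hxy, x, y, rfl, hx, hy⟩, rfl⟩
  have hyS : q y ∉ q '' S := fun h => hy (hS ▸ h)
  have hne : q x ≠ q y := fun h => hyS (h ▸ mem_image_of_mem q hx)
  exact ⟨s(q x, q y), ⟨hH x y hxy hne, q x, q y, rfl, mem_image_of_mem q hx, hyS⟩, hc x y hxy⟩

lemma preimage_image_eq_of_forall_ne {v0 : W}
    (hq : ∀ x y, q x = q y → x = y ∨ q x = v0) {S : Set V} (hS : ∀ x ∈ S, q x ≠ v0) :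
    q ⁻¹' (q '' S) = S := by
  refine Subset.antisymm ?_ (subset_preimage_image q S)
  rintro y ⟨x, hx, hxy⟩
  rcases hq x y hxy with rfl | h
  · exact hx
  · exact absurd h (hS x hx)

end Quotient

section ColorfulCut

variable {V W α : Type*} {G : SimpleGraph V} {c : Sym2 V → α} {S : Set V}

def IsColorfulCut (G : SimpleGraph V) (c : Sym2 V → α) (S : Set V) : Prop :=
  S.Nonempty ∧ S ≠ univ ∧ c '' cutEdges G S = univ

lemma IsColorfulCut.cutEdges_nonempty [Nonempty α] (hS : IsColorfulCut G c S) :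
    (cutEdges G S).Nonempty :=
  image_nonempty.mp (hS.2.2 ▸ univ_nonempty)

lemma exists_cutEdges_eq_and_disjoint {A : Set V}
    (hA : ∀ y ∈ A, ∀ z ∈ A, G.Reachable y z → y = z) (S : Set V) :
    ∃ S', cutEdges G S' = cutEdges G S ∧ Disjoint S' A := by
  -- complement `S` inside each component whose vertex of `A` lies in `S`
  set R : Set V := {x | ∃ y ∈ S ∩ A, G.Reachable x y}
  refine ⟨S ∆ R, cutEdges_symmDiff_of_adj fun u v huv => ?_, disjoint_left.mpr fun y hy hyA => ?_⟩
  · exact ⟨fun ⟨y, hy, hr⟩ => ⟨y, hy, huv.reachable.symm.trans hr⟩,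
      fun ⟨y, hy, hr⟩ => ⟨y, hy, huv.reachable.trans hr⟩⟩
  · have : y ∈ R ↔ y ∈ S :=
      ⟨fun ⟨z, ⟨hzS, hzA⟩, hr⟩ => hA y hyA z hzA hr ▸ hzS, fun hyS => ⟨y, ⟨hyS, hyA⟩, .refl y⟩⟩
    simp only [mem_symmDiff] at hy
    tauto

lemma IsColorfulCut.exists_disjoint [Nonempty α] (hS : IsColorfulCut G c S) {A : Set V}
    (hA : ∀ y ∈ A, ∀ z ∈ A, G.Reachable y z → y = z) (hA_ne : A.Nonempty) :
    ∃ S', IsColorfulCut G c S' ∧ Disjoint S' A := by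
  obtain ⟨S', hcut, hdisj⟩ := exists_cutEdges_eq_and_disjoint hA S
  obtain ⟨a, ha⟩ := hA_ne
  refine ⟨S', ⟨(hcut ▸ hS.cutEdges_nonempty).of_cutEdges, fun h => ?_, hcut ▸ hS.2.2⟩, hdisj⟩
  exact disjoint_left.mp hdisj (h ▸ mem_univ a) ha

variable {H : SimpleGraph W} {q : V → W} {c' : Sym2 W → α}

lemma IsColorfulCut.preimage (hq : Surjective q)
    (hH : ∀ a b, H.Adj a b → ∃ x y, G.Adj x y ∧ q x = a ∧ q y = b)
    (hc : ∀ x y, G.Adj x y → c' s(q x, q y) = c s(x, y)) {T : Set W}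
    (hT : IsColorfulCut H c' T) : IsColorfulCut G c (q ⁻¹' T) :=
  ⟨hT.1.preimage hq, fun h => hT.2.1 (preimage_injective.mpr hq (h.trans preimage_univ.symm)),
    eq_univ_of_univ_subset (hT.2.2 ▸ image_cutEdges_subset_image_cutEdges_preimage hH hc T)⟩

lemma IsColorfulCut.image (hH : ∀ x y, G.Adj x y → q x ≠ q y → H.Adj (q x) (q y))
    (hc : ∀ x y, G.Adj x y → c' s(q x, q y) = c s(x, y)) (hS : IsColorfulCut G c S)
    (hsat : q ⁻¹' (q '' S) = S) {w : W} (hw : w ∉ q '' S) : IsColorfulCut H c' (q '' S) :=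
  ⟨hS.1.image q, fun h => hw (h ▸ mem_univ w),
    eq_univ_of_univ_subset (hS.2.2 ▸ image_cutEdges_subset_image_cutEdges_image hH hc hsat)⟩

end ColorfulCut

theorem stmt16_general {V V' : Type*}
    (G : SimpleGraph V) (p : ℕ) (hp : 0 < p) (c : Sym2 V → Fin p)
    (q : V → V') (hq : Function.Surjective q) (v0 : V')
    (hident : ∀ x y : V, q x = q y ↔ (x = y ∨ (q x = v0 ∧ q y = v0)))
    (hchoice : ∀ x : V, ∃! y : V, q y = v0 ∧ G.Reachable x y)
    (Gq : SimpleGraph V')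
    (hGq : ∀ a b : V', Gq.Adj a b ↔ a ≠ b ∧ ∃ x y : V, G.Adj x y ∧ q x = a ∧ q y = b)
    (c' : Sym2 V' → Fin p)
    (hc' : ∀ x y : V, G.Adj x y → c' s(q x, q y) = c s(x, y)) :
    (∃ T : Set V', T.Nonempty ∧ T ≠ Set.univ ∧ c' '' cutEdges Gq T = Set.univ) ↔
      (∃ S : Set V, S.Nonempty ∧ S ≠ Set.univ ∧ c '' cutEdges G S = Set.univ) := by
  constructor
  · rintro ⟨T, hT⟩
    exact ⟨q ⁻¹' T, IsColorfulCut.preimage hq (fun a b h => ((hGq a b).mp h).2) hc' hT⟩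
  · rintro ⟨S, hS⟩
    have : Nonempty (Fin p) := ⟨⟨0, hp⟩⟩
    obtain ⟨y0, hy0⟩ := hq v0
    obtain ⟨S', hS', hdisj⟩ := IsColorfulCut.exists_disjoint hS (A := q ⁻¹' {v0})
      (fun y hy z hz hr => (hchoice y).unique ⟨hy, .refl y⟩ ⟨hz, hr⟩) ⟨y0, hy0⟩
    have hv0 : ∀ x ∈ S', q x ≠ v0 := fun x hx h => disjoint_left.mp hdisj hx h
    exact ⟨q '' S', hS'.image (fun x y h hne => (hGq _ _).mpr ⟨hne, x, y, h, rfl, rfl⟩) hc'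
      (preimage_image_eq_of_forall_ne (fun x y h => ((hident x y).mp h).imp_right And.left) hv0)
      (w := v0) fun ⟨x, hx, h⟩ => hv0 x hx h⟩

/-- Identifying one chosen vertex of each connected component of `G` into a single vertex
preserves the existence of a colorful cut. -/
theorem stmt16 {V V' : Type*} [Fintype V] [Fintype V']
    (G : SimpleGraph V) (p : ℕ) (hp : 0 < p) (c : Sym2 V → Fin p)
    (hsurj : ∀ i : Fin p, ∃ e ∈ G.edgeSet, c e = i)
    (q : V → V') (hq : Function.Surjective q) (v0 : V')
    (hident : ∀ x y : V, q x = q y ↔ (x = y ∨ (q x = v0 ∧ q y = v0)))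
    (hchoice : ∀ x : V, ∃! y : V, q y = v0 ∧ G.Reachable x y)
    (Gq : SimpleGraph V')
    (hGq : ∀ a b : V', Gq.Adj a b ↔ a ≠ b ∧ ∃ x y : V, G.Adj x y ∧ q x = a ∧ q y = b)
    (c' : Sym2 V' → Fin p)
    (hc' : ∀ x y : V, G.Adj x y → c' s(q x, q y) = c s(x, y)) :
    (∃ T : Set V', T.Nonempty ∧ T ≠ Set.univ ∧ c' '' cutEdges Gq T = Set.univ) ↔
      (∃ S : Set V, S.Nonempty ∧ S ≠ Set.univ ∧ c '' cutEdges G S = Set.univ) :=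
  stmt16_general G p hp c q hq v0 hident hchoice Gq hGq c' hc'
end
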